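/- Let λ > 0, β > 0, d a positive integer, and let Ψ be a family of subsets of {1,…,d} with ∅ ∉ Ψ. Define Z(Ψ) := Σ_{ψ∈Ψ} λ^{|ψ|}(1 + λe^{−β|ψ|})^d and ℓ_Ψ := |{i ∈ [d] : i ∉ ψ for all ψ ∈ Ψ}|. Then Z(Ψ) ≤ (1 + λe^{−β·s})^d · (1+λ)^{d − ℓ_Ψ} whenever s ≤ min over ψ ∈ Ψ of |ψ|; in particular, if every ψ ∈ Ψ satisfies |ψ| > s, then Z(Ψ) ≤ (1+λ)^d exp(−ᾱ·ℓ_Ψ)·(1 + λe^{−βs})^d, where ᾱ := log((1+λ)/(1+λe^{−β})). -/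
import Mathlib

open scoped Classical

theorem Z_Psi_bound (d : ℕ) (hd : 0 < d) (lam β : ℝ) (hlam : 0 < lam) (hβ : 0 < β)
    (Ψ : Finset (Finset (Fin d))) (hΨ : ∅ ∉ Ψ) (s : ℝ) :
    ((∀ ψ ∈ Ψ, s ≤ (ψ.card : ℝ)) →
      ∑ ψ ∈ Ψ, lam ^ ψ.card * (1 + lam * Real.exp (-β * (ψ.card : ℝ))) ^ d ≤
        (1 + lam * Real.exp (-β * s)) ^ d *
          (1 + lam) ^ (d - (Finset.univ.filter (fun i : Fin d => ∀ ψ ∈ Ψ, i ∉ ψ)).card)) ∧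
    ((∀ ψ ∈ Ψ, s < (ψ.card : ℝ)) →
      ∑ ψ ∈ Ψ, lam ^ ψ.card * (1 + lam * Real.exp (-β * (ψ.card : ℝ))) ^ d ≤
        (1 + lam) ^ d *
          Real.exp (-(Real.log ((1 + lam) / (1 + lam * Real.exp (-β)))) *
            ((Finset.univ.filter (fun i : Fin d => ∀ ψ ∈ Ψ, i ∉ ψ)).card : ℝ)) *
          (1 + lam * Real.exp (-β * s)) ^ d) := by
  set ℓ : ℕ := (Finset.univ.filter (fun i : Fin d => ∀ ψ ∈ Ψ, i ∉ ψ)).card with hℓ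
  have hℓd : ℓ ≤ d := by
    calc ℓ ≤ Finset.univ.card := Finset.card_filter_le _ _
    _ = d := by simp
  have h1lam : (0:ℝ) < 1 + lam := by linarith
  have first : (∀ ψ ∈ Ψ, s ≤ (ψ.card : ℝ)) →
      ∑ ψ ∈ Ψ, lam ^ ψ.card * (1 + lam * Real.exp (-β * (ψ.card : ℝ))) ^ d ≤
        (1 + lam * Real.exp (-β * s)) ^ d * (1 + lam) ^ (d - ℓ) := by
    intro hs
    set S : Finset (Fin d) := Finset.univ.filter (fun i : Fin d => ∃ ψ ∈ Ψ, i ∈ ψ) with hS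
    have hScard : S.card = d - ℓ := by
      have := Finset.card_filter_add_card_filter_not
        (s := (Finset.univ : Finset (Fin d))) (p := fun i : Fin d => ∀ ψ ∈ Ψ, i ∉ ψ)
      have hSeq : S = Finset.univ.filter (fun i : Fin d => ¬ ∀ ψ ∈ Ψ, i ∉ ψ) := by
        apply Finset.filter_congr
        intro i _
        push_neg
        simp
      rw [hSeq]
      simp only [Finset.card_univ, Fintype.card_fin] at this
      omega
    have hsub : Ψ ⊆ S.powerset := by
      intro ψ hψ
      rw [Finset.mem_powerset]
      intro i hi
      simp only [hS, Finset.mem_filter, Finset.mem_univ, true_and]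
      exact ⟨ψ, hψ, hi⟩
    have hsum1 : ∑ ψ ∈ Ψ, lam ^ ψ.card ≤ (1 + lam) ^ (d - ℓ) := by
      calc ∑ ψ ∈ Ψ, lam ^ ψ.card ≤ ∑ ψ ∈ S.powerset, lam ^ ψ.card :=
            Finset.sum_le_sum_of_subset_of_nonneg hsub
              (fun ψ _ _ => pow_nonneg hlam.le _)
        _ = ∑ ψ ∈ S.powerset, lam ^ ψ.card * 1 ^ (S.card - ψ.card) := by simp
        _ = (lam + 1) ^ S.card := Finset.sum_pow_mul_eq_add_pow _ _ _
        _ = (1 + lam) ^ (d - ℓ) := by rw [add_comm, hScard]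
    have hC : ∀ ψ ∈ Ψ, (1 + lam * Real.exp (-β * (ψ.card:ℝ))) ^ d ≤
        (1 + lam * Real.exp (-β * s)) ^ d := by
      intro ψ hψ
      apply pow_le_pow_left₀
      · positivity
      · have : Real.exp (-β * (ψ.card:ℝ)) ≤ Real.exp (-β * s) :=
          Real.exp_le_exp.2 (by nlinarith [hs ψ hψ])
        nlinarith
    calc ∑ ψ ∈ Ψ, lam ^ ψ.card * (1 + lam * Real.exp (-β * (ψ.card : ℝ))) ^ d
        ≤ ∑ ψ ∈ Ψ, lam ^ ψ.card * (1 + lam * Real.exp (-β * s)) ^ d := by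
          apply Finset.sum_le_sum
          intro ψ hψ
          exact mul_le_mul_of_nonneg_left (hC ψ hψ) (pow_nonneg hlam.le _)
      _ = (∑ ψ ∈ Ψ, lam ^ ψ.card) * (1 + lam * Real.exp (-β * s)) ^ d := by
          rw [Finset.sum_mul]
      _ ≤ (1 + lam) ^ (d - ℓ) * (1 + lam * Real.exp (-β * s)) ^ d := by
          apply mul_le_mul_of_nonneg_right hsum1; positivity
      _ = (1 + lam * Real.exp (-β * s)) ^ d * (1 + lam) ^ (d - ℓ) := mul_comm _ _
  refine ⟨first, fun hs => ?_⟩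
  have h1 := first (fun ψ hψ => (hs ψ hψ).le)
  refine h1.trans ?_
  have hr : (0:ℝ) < 1 + lam * Real.exp (-β) := by positivity
  have hexp : Real.exp (-(Real.log ((1 + lam) / (1 + lam * Real.exp (-β)))) * (ℓ:ℝ))
      = ((1 + lam * Real.exp (-β)) / (1 + lam)) ^ ℓ := by
    have hlog : -(Real.log ((1 + lam) / (1 + lam * Real.exp (-β))))
        = Real.log ((1 + lam * Real.exp (-β)) / (1 + lam)) := by
      rw [← Real.log_inv, inv_div]
    rw [hlog, mul_comm, Real.exp_nat_mul, Real.exp_log (by positivity)]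
  have key : (1 + lam) ^ (d - ℓ)
      ≤ (1 + lam) ^ d * ((1 + lam * Real.exp (-β)) / (1 + lam)) ^ ℓ := by
    rw [div_pow, ← mul_div_assoc, le_div_iff₀ (pow_pos h1lam ℓ), ← pow_add]
    have hde : d - ℓ + ℓ = d := by omega
    rw [hde]
    exact le_mul_of_one_le_right (pow_nonneg h1lam.le _)
      (one_le_pow₀ (by nlinarith [Real.exp_pos (-β)]))
  calc (1 + lam * Real.exp (-β * s)) ^ d * (1 + lam) ^ (d - ℓ)
      ≤ (1 + lam * Real.exp (-β * s)) ^ d *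
          ((1 + lam) ^ d * ((1 + lam * Real.exp (-β)) / (1 + lam)) ^ ℓ) :=
        mul_le_mul_of_nonneg_left key (by positivity)
    _ = (1 + lam) ^ d *
          Real.exp (-(Real.log ((1 + lam) / (1 + lam * Real.exp (-β)))) * (ℓ:ℝ)) *
          (1 + lam * Real.exp (-β * s)) ^ d := by rw [hexp]; ring
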